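/- arXiv:1306.1464 — 4 statements merged into one kernel-verified Lean document; each statement's English description precedes it below -/
import Mathlib

section
/- Let B be a Boolean algebra and S(B) its Stone space. Suppose X is a subset of B and c ∈ B is the supremum of X (i.e., IsLUB X c). Then the set N_c \ ⋃_{x ∈ X} N_x is nowhere dense in S(B) (its closure has empty interior). In particular, if c = ⊤, the set S(B) \ ⋃_{x ∈ X} N_x is nowhere dense. -/
/-- A Boolean algebra homomorphism into the two-element Boolean algebra `Bool`. -/
def IsBoolHom {B : Type*} [BooleanAlgebra B] (h : B → Bool) : Prop :=
  h ⊤ = true ∧ h ⊥ = false ∧ (∀ a b : B, h (a ⊓ b) = (h a && h b)) ∧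
  (∀ a b : B, h (a ⊔ b) = (h a || h b)) ∧ (∀ a : B, h aᶜ = !h a)

/-- The Stone space of a Boolean algebra: Boolean homomorphisms `B → Bool`,
topologized as a subspace of the product `Bool ^ B` (with `Bool` discrete). -/
abbrev StoneSpace (B : Type*) [BooleanAlgebra B] : Type _ := {h : B → Bool // IsBoolHom h}

/-- The basic clopen set `N_b = {h ∈ S(B) : h b = true}`. -/
def StoneN {B : Type*} [BooleanAlgebra B] (b : B) : Set (StoneSpace B) :=
  {h : StoneSpace B | h.1 b = true}

/-!
A Boolean homomorphism `h` in the interior of the closed set `T = N_c \ ⋃_{x ∈ X} N_x` has a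
basic clopen neighbourhood `N_b ⊆ T`. Since `N_a ⊆ N_a'` exactly when `a ≤ a'` (by the prime
ideal theorem), `N_b ⊆ N_c` gives `b ≤ c`, and `N_b ∩ N_x = ∅` gives `x ≤ bᶜ` for every
`x ∈ X`, hence `c ≤ bᶜ` because `c` is the least upper bound of `X`. Thus `b ≤ bᶜ`, i.e.
`b = ⊥`, contradicting `h ∈ N_b`.
-/

section

open Order Set

variable {B : Type*} [BooleanAlgebra B]

open Classical in
lemma Order.Ideal.IsPrime.isBoolHom {J : Ideal B} (hJ : J.IsPrime) :
    IsBoolHom fun x => decide (x ∉ J) := by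
  have inf_mem_iff (x y : B) : x ⊓ y ∈ J ↔ x ∈ J ∨ y ∈ J :=
    ⟨hJ.mem_or_mem, fun h => h.elim (J.lower inf_le_left) (J.lower inf_le_right)⟩
  have compl_mem_iff (x : B) : xᶜ ∈ J ↔ x ∉ J :=
    ⟨fun hxc hx => hJ.toIsProper.top_notMem (sup_compl_eq_top (x := x) ▸ J.sup_mem hx hxc),
      hJ.compl_mem_of_notMem⟩
  refine ⟨?_, ?_, fun x y => ?_, fun x y => ?_, fun x => ?_⟩
  · simp [hJ.toIsProper.top_notMem]
  · simp [J.bot_mem]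
  · by_cases hx : x ∈ J <;> by_cases hy : y ∈ J <;> simp [inf_mem_iff, hx, hy]
  · by_cases hx : x ∈ J <;> by_cases hy : y ∈ J <;> simp [Ideal.sup_mem_iff, hx, hy]
  · by_cases hx : x ∈ J <;> simp [compl_mem_iff, hx]

lemma stoneN_nonempty {a : B} (ha : a ≠ ⊥) : (StoneN a).Nonempty := by
  have hdisj : Disjoint (PFilter.principal a : Set B) (Ideal.principal (⊥ : B)) :=
    Set.disjoint_left.2 fun x (hax : a ≤ x) (hx : x ≤ ⊥) => ha (le_bot_iff.1 (hax.trans hx))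
  obtain ⟨J, hJ, -, hJa⟩ := DistribLattice.prime_ideal_of_disjoint_filter_ideal hdisj
  have haJ : a ∉ J := Set.disjoint_left.1 hJa (PFilter.mem_principal.2 le_rfl)
  exact ⟨⟨_, hJ.isBoolHom⟩, by simpa [StoneN] using haJ⟩

@[simp]
lemma stoneN_top : StoneN (⊤ : B) = univ :=
  eq_univ_of_forall fun g => g.2.1

@[simp]
lemma stoneN_bot : StoneN (⊥ : B) = ∅ :=
  eq_empty_of_forall_notMem fun g (hg : g.1 ⊥ = true) => by simp [g.2.2.1] at hg

lemma stoneN_inf (a b : B) : StoneN (a ⊓ b) = StoneN a ∩ StoneN b := by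
  ext g
  simp [StoneN, g.2.2.2.1]

lemma stoneN_compl (a : B) : StoneN aᶜ = (StoneN a)ᶜ := by
  ext g
  simp [StoneN, g.2.2.2.2.2]

lemma stoneN_finset_inf {ι : Type*} (s : Finset ι) (f : ι → B) :
    StoneN (s.inf f) = ⋂ i ∈ s, StoneN (f i) := by
  classical
  induction s using Finset.induction with
  | empty => simp
  | insert i s _ ih => simp [stoneN_inf, ih]

lemma stoneN_subset_stoneN_iff {a b : B} : StoneN a ⊆ StoneN b ↔ a ≤ b := by
  refine ⟨fun hab => ?_, fun hab g hg => ?_⟩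
  · by_contra hnle
    obtain ⟨g, hg⟩ := stoneN_nonempty (a := a ⊓ bᶜ)
      fun h => hnle (disjoint_compl_right_iff.1 (disjoint_iff.2 h))
    rw [stoneN_inf, stoneN_compl] at hg
    exact hg.2 (hab hg.1)
  · rw [← inf_eq_left.2 hab, stoneN_inf] at hg
    exact hg.2

lemma isClopen_stoneN (b : B) : IsClopen (StoneN b) :=
  (isClopen_discrete {true}).preimage ((continuous_apply b).comp continuous_subtype_val)

lemma mem_stoneN_ite {g : StoneSpace B} {i : B} {p : Bool} :
    g ∈ StoneN (if p then i else iᶜ) ↔ g.1 i = p := by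
  cases p <;> simp [StoneN, g.2.2.2.2.2]

lemma exists_stoneN_subset_of_isOpen {U : Set (StoneSpace B)} (hU : IsOpen U) {h : StoneSpace B}
    (hh : h ∈ U) : ∃ b, h ∈ StoneN b ∧ StoneN b ⊆ U := by
  obtain ⟨t, ht, rfl⟩ := isOpen_induced_iff.1 hU
  obtain ⟨I, u, hu, hIu⟩ := isOpen_pi_iff.1 ht h.1 hh
  refine ⟨I.inf fun i => if h.1 i then i else iᶜ, ?_, fun g hg => hIu fun i hi => ?_⟩
  · simp only [stoneN_finset_inf, mem_iInter₂, mem_stoneN_ite, implies_true]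
  · simp only [stoneN_finset_inf, mem_iInter₂, mem_stoneN_ite] at hg
    exact hg i hi ▸ (hu i hi).2

lemma interior_stoneN_diff_iUnion_eq_empty {X : Set B} {c : B} (hc : IsLUB X c) :
    interior (StoneN c \ ⋃ x ∈ X, StoneN x) = ∅ := by
  refine eq_empty_of_forall_notMem fun h hh => ?_
  obtain ⟨b, hhb, hbT⟩ := exists_stoneN_subset_of_isOpen isOpen_interior hh
  replace hbT := hbT.trans interior_subset
  have hbc : b ≤ c := stoneN_subset_stoneN_iff.1 fun g hg => (hbT hg).1
  have hXb : ∀ x ∈ X, x ≤ bᶜ := fun x hx => le_compl_comm.1 <| stoneN_subset_stoneN_iff.1 <|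
    fun g hg => by rw [stoneN_compl]; exact fun hgx => (hbT hg).2 (mem_biUnion hx hgx)
  have hb : b = ⊥ := le_compl_self.1 (hbc.trans (hc.2 hXb))
  rw [hb, stoneN_bot] at hhb
  exact hhb

end

/-- If `c = sup X` in a Boolean algebra `B`, then `N_c \ ⋃_{x ∈ X} N_x` is nowhere
dense in the Stone space of `B`; in particular if `c = ⊤` then
`S(B) \ ⋃_{x ∈ X} N_x` is nowhere dense. -/
theorem nowhereDense_of_isLUB {B : Type*} [BooleanAlgebra B] (X : Set B) (c : B)
    (hc : IsLUB X c) :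
    IsNowhereDense (StoneN c \ ⋃ x ∈ X, StoneN x) ∧
    (c = ⊤ →
      IsNowhereDense ((Set.univ : Set (StoneSpace B)) \ ⋃ x ∈ X, StoneN x)) := by
  have hT : IsNowhereDense (StoneN c \ ⋃ x ∈ X, StoneN x) := by
    have hclosed : IsClosed (StoneN c \ ⋃ x ∈ X, StoneN x) :=
      (isClopen_stoneN c).isClosed.sdiff (isOpen_biUnion fun x _ => (isClopen_stoneN x).isOpen)
    exact hclosed.isNowhereDense_iff.2 (interior_stoneN_diff_iUnion_eq_empty hc)
  refine ⟨hT, fun hctop => ?_⟩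
  rwa [hctop, stoneN_top] at hT
end

section
/- Let A be a Boolean algebra, V a set, and f : A → Set V a representation of A on V (a Boolean algebra homomorphism into the powerset algebra of V with f ⊤ = V). Then f is an atomic representation if and only if f is a complete representation. -/
/-- A representation of a Boolean algebra `A` on a set `V`: a Boolean algebra
homomorphism into the powerset algebra of `V`. -/
structure IsRepresentation {A : Type*} [BooleanAlgebra A] {V : Type*}
    (f : A → Set V) : Prop where
  map_bot : f ⊥ = ∅
  map_top : f ⊤ = Set.univ
  map_inf : ∀ a b : A, f (a ⊓ b) = f a ∩ f b
  map_sup : ∀ a b : A, f (a ⊔ b) = f a ∪ f b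
  map_compl : ∀ a : A, f aᶜ = (f a)ᶜ

/-- A representation `f` is atomic (every point satisfies a minimal element,
i.e. each ultrafilter `f⁻¹(s)` is principal) iff it is complete (it carries
every existing infimum to the set-theoretic intersection). -/
theorem atomic_iff_complete_representation {A V : Type*} [BooleanAlgebra A]
    (f : A → Set V) (hf : IsRepresentation f) :
    (∀ s : V, ∃ m : A, IsLeast {a : A | s ∈ f a} m) ↔
    (∀ (X : Set A) (c : A), IsGLB X c → f c = ⋂ x ∈ X, f x) := by
  have mono : ∀ a b : A, a ≤ b → f a ⊆ f b := by
    intro a b hab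
    have : f (a ⊓ b) = f a ∩ f b := hf.map_inf a b
    rw [inf_eq_left.mpr hab] at this
    rw [this]
    exact Set.inter_subset_right
  constructor
  · intro hat X c hglb
    apply Set.Subset.antisymm
    · exact Set.subset_iInter₂ fun x hx => mono c x (hglb.1 hx)
    · intro s hs
      obtain ⟨m, hm⟩ := hat s
      have hmc : m ≤ c := hglb.2 fun x hx => hm.2 (Set.mem_iInter₂.mp hs x hx)
      exact mono m c hmc hm.1
  · intro hcomp s
    by_contra hno
    push_neg at hno
    set U : Set A := {a : A | s ∈ f a} with hU
    have hglb : IsGLB U ⊥ := by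
      constructor
      · intro a _; exact bot_le
      · intro b hb
        by_cases hbU : b ∈ U
        · exact absurd ⟨hbU, hb⟩ (hno b)
        · have hsc : s ∈ f bᶜ := by
            rw [hf.map_compl]; exact hbU
          have : b ≤ bᶜ := hb hsc
          have hbbot : b = ⊥ := by
            have := inf_eq_left.mpr this
            rwa [inf_compl_eq_bot, eq_comm] at this
          exact le_of_eq hbbot
    have := hcomp U ⊥ hglb
    rw [hf.map_bot] at this
    have : s ∈ (∅ : Set V) := this ▸ Set.mem_iInter₂.mpr fun x hx => hx
    exact this
end

section
/- Let A be a Boolean algebra, V a set, and f : A → Set V an injective representation of A on V that is complete (f c = ⋂_{x ∈ X} f x whenever IsGLB X c). Then A is atomic: every nonzero element of A has an atom below it. -/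
/-- A Boolean algebra admitting an injective complete representation is atomic:
every nonzero element has an atom below it. -/
theorem atomic_of_complete_representation {A V : Type*} [BooleanAlgebra A]
    (f : A → Set V) (hf : IsRepresentation f) (hinj : Function.Injective f)
    (hcomp : ∀ (X : Set A) (c : A), IsGLB X c → f c = ⋂ x ∈ X, f x) :
    ∀ a : A, a ≠ ⊥ → ∃ b : A, IsAtom b ∧ b ≤ a := by
  intro a ha
  have hne : (f a).Nonempty := by
    rw [Set.nonempty_iff_ne_empty]
    intro h
    exact ha (hinj (h.trans hf.map_bot.symm))
  obtain ⟨v, hv⟩ := hne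
  set X : Set A := {x | v ∈ f x} with hX
  have hnotglb : ¬ IsGLB X ⊥ := by
    intro h
    have h2 := hcomp X ⊥ h
    rw [hf.map_bot] at h2
    have : v ∈ (∅ : Set V) := by
      rw [h2]
      exact Set.mem_iInter₂.mpr fun x hx => hx
    exact this
  have hex : ∃ b ∈ lowerBounds X, ¬ b ≤ ⊥ := by
    by_contra h
    push_neg at h
    exact hnotglb ⟨fun x _ => bot_le, fun y hy => h y hy⟩
  obtain ⟨b, hb, hbne⟩ := hex
  refine ⟨b, ⟨fun h => hbne (le_of_eq h), ?_⟩, hb hv⟩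
  intro c hc
  by_cases hvc : v ∈ f c
  · exact absurd (hb hvc) hc.not_ge
  · have hvcc : v ∈ f cᶜ := by rw [hf.map_compl]; exact hvc
    have hbc : b ≤ cᶜ := hb hvcc
    have hcc : c ≤ cᶜ := hc.le.trans hbc
    simpa using hcc
end

section
/- Let A be a Boolean algebra, W a set, and f : A → Set W an injective Boolean algebra homomorphism with f ⊤ = W. Let g : A → A and G : Set W → Set W be maps such that G ∘ f = f ∘ g, G preserves arbitrary unions (G(⋃_{i} S_i) = ⋃_i G(S_i)), and G W = W. If X ⊆ A satisfies ⋃_{x ∈ X} f x = W, then IsLUB (g '' X) ⊤, i.e., ⊤ is the supremum of {g x : x ∈ X}. (This is the abstract content of the fact that a completely representable algebra is completely additive: if the supremum of X is carried to the union W by the representation, then each substitution operator g carries X to a set with supremum ⊤.) -/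
/-- Abstract complete additivity from a complete representation: if the injective
Boolean homomorphism `f : A → Set W` (with `f ⊤ = W`) intertwines `g : A → A`
with a union-preserving map `G : Set W → Set W` fixing `W`, and the images of
`X ⊆ A` cover `W`, then `⊤` is the supremum of `g '' X`. -/
theorem isLUB_image_top_of_cover {A W : Type*} [BooleanAlgebra A] (f : A → Set W)
    (hbot : f ⊥ = ∅) (htop : f ⊤ = Set.univ)
    (hinf : ∀ a b : A, f (a ⊓ b) = f a ∩ f b)
    (hsup : ∀ a b : A, f (a ⊔ b) = f a ∪ f b)
    (hcompl : ∀ a : A, f aᶜ = (f a)ᶜ)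
    (hinj : Function.Injective f)
    (g : A → A) (G : Set W → Set W)
    (hGf : G ∘ f = f ∘ g)
    (hGU : ∀ S : Set (Set W), G (⋃₀ S) = ⋃ s ∈ S, G s)
    (hGW : G Set.univ = Set.univ)
    (X : Set A) (hX : ⋃ x ∈ X, f x = Set.univ) :
    IsLUB (g '' X) ⊤ := by
  have hmono : ∀ a b : A, a ≤ b → f a ⊆ f b := by
    intro a b hab
    have : f (a ⊓ b) = f a := by rw [inf_eq_left.mpr hab]
    rw [← this, hinf]; exact Set.inter_subset_right
  constructor
  · intro y _; exact le_top
  · intro b hb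
    have hsub : ∀ x ∈ X, G (f x) ⊆ f b := by
      intro x hx
      have : G (f x) = f (g x) := congrFun hGf x
      rw [this]
      exact hmono _ _ (hb ⟨x, hx, rfl⟩)
    have hXU : ⋃₀ (f '' X) = Set.univ := by
      rw [Set.sUnion_image]; exact hX
    have : Set.univ ⊆ f b := by
      rw [← hGW, ← hXU, hGU]
      intro w hw
      simp only [Set.mem_iUnion] at hw
      obtain ⟨s, ⟨x, hx, rfl⟩, hws⟩ := hw
      exact hsub x hx hws
    have : f b = Set.univ := Set.eq_univ_of_univ_subset this
    have : b = ⊤ := hinj (by rw [this, htop])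
    exact this.ge
end
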